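/- Let Ω ⊆ ℝⁿ be a nonempty closed set and 0 < λ < 1, p ≥ 1, w a weight. For any 0 < r₁ < r₂ < ∞ there exist 1 < α₁ < α₂ < ∞ and constants c, C > 0 such that for all measurable f: c·‖f‖_{M^p_{λ,W_{α₁,α₂}}(w)} ≤ ‖f‖_{M^p_{λ,W_{r₁,r₂}}(w)} ≤ C·‖f‖_{M^p_{λ,W_{α₁,α₂}}(w)}. -/

import Mathlib

open MeasureTheory ENNReal

noncomputable section

/-- An axis-parallel cube in `ℝⁿ`, given by its center and (positive) side length. -/
structure Cube (n : ℕ) where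
  center : EuclideanSpace ℝ (Fin n)
  side : ℝ
  side_pos : 0 < side

namespace Cube

variable {n : ℕ}

/-- The (closed) cube as a subset of `ℝⁿ`. -/
def toSet (Q : Cube n) : Set (EuclideanSpace ℝ (Fin n)) :=
  {x | ∀ i, |x i - Q.center i| ≤ Q.side / 2}

/-- The volume `|Q| = side^n` of a cube. -/
def vol (Q : Cube n) : ℝ := Q.side ^ n

/-- The Euclidean diameter `√n · side` of a cube. -/
def diam (Q : Cube n) : ℝ := Real.sqrt n * Q.side

/-- The concentric dilation `tQ` of a cube. -/
def dilate (Q : Cube n) (t : ℝ) (ht : 0 < t) : Cube n :=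
  ⟨Q.center, t * Q.side, mul_pos ht Q.side_pos⟩

/-- A dyadic child of a cube, indexed by a choice of sign in each coordinate. -/
def child (Q : Cube n) (s : Fin n → Bool) : Cube n :=
  ⟨WithLp.toLp 2 (fun i => Q.center i + (if s i then (1 : ℝ) else -1) * Q.side / 4), Q.side / 2, by
    have := Q.side_pos; linarith⟩

end Cube

/-- Distance between two sets in `ℝⁿ`: `inf {dist x y : x ∈ A, y ∈ B}`. -/
def setDist {n : ℕ} (A B : Set (EuclideanSpace ℝ (Fin n))) : ℝ :=
  ⨅ (x : A) (y : B), dist (x : EuclideanSpace ℝ (Fin n)) (y : EuclideanSpace ℝ (Fin n))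

/-- The average `⟨|f|⟩_Q = (1/|Q|) ∫_Q |f|` (as an extended nonnegative real). -/
def avg {n : ℕ} (Q : Cube n) (f : EuclideanSpace ℝ (Fin n) → ℝ) : ℝ≥0∞ :=
  (ENNReal.ofReal Q.vol)⁻¹ * ∫⁻ x in Q.toSet, ENNReal.ofReal |f x|

/-- The Hardy–Littlewood maximal operator over axis-parallel cubes. -/
def maximal {n : ℕ} (f : EuclideanSpace ℝ (Fin n) → ℝ)
    (x : EuclideanSpace ℝ (Fin n)) : ℝ≥0∞ :=
  ⨆ (Q : Cube n) (_ : x ∈ Q.toSet), avg Q f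

/-- Weighted Morrey norm adapted to a family `F` of cubes, for `ℝ≥0∞`-valued `f`:
`sup_{Q ∈ F} ((1/|Q|^λ) ∫_Q f^p w)^{1/p}`. -/
def morreyNormE {n : ℕ} (F : Set (Cube n)) (lam p : ℝ)
    (w : EuclideanSpace ℝ (Fin n) → ℝ) (f : EuclideanSpace ℝ (Fin n) → ℝ≥0∞) : ℝ≥0∞ :=
  ⨆ (Q : Cube n) (_ : Q ∈ F),
    ((ENNReal.ofReal (Q.vol ^ lam))⁻¹ *
      ∫⁻ x in Q.toSet, (f x) ^ p * ENNReal.ofReal (w x)) ^ (1 / p)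

/-- Weighted Morrey norm adapted to a family `F` of cubes, for real-valued `f`. -/
def morreyNorm {n : ℕ} (F : Set (Cube n)) (lam p : ℝ)
    (w f : EuclideanSpace ℝ (Fin n) → ℝ) : ℝ≥0∞ :=
  morreyNormE F lam p w (fun x => ENNReal.ofReal |f x|)

/-- The Whitney-type family `W_{r₁,r₂}` of cubes with
`r₁ diam Q ≤ dist(Q,Ω) ≤ r₂ diam Q`. -/
def whitneyFamily {n : ℕ} (Ω : Set (EuclideanSpace ℝ (Fin n))) (r₁ r₂ : ℝ) :
    Set (Cube n) :=
  {Q | r₁ * Q.diam ≤ setDist Q.toSet Ω ∧ setDist Q.toSet Ω ≤ r₂ * Q.diam}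

/-- The Muckenhoupt-type condition `A_X` for the weighted Morrey space attached to `F`:
`⟨|f|⟩_Q ‖χ_Q‖ ≤ C ‖f χ_Q‖` for all `f` and all cubes `Q`. -/
def morreyA {n : ℕ} (F : Set (Cube n)) (lam p : ℝ)
    (w : EuclideanSpace ℝ (Fin n) → ℝ) (C : ℝ) : Prop :=
  ∀ (f : EuclideanSpace ℝ (Fin n) → ℝ) (Q : Cube n),
    avg Q f * morreyNorm F lam p w (Q.toSet.indicator fun _ => 1) ≤
      ENNReal.ofReal C * morreyNorm F lam p w (Q.toSet.indicator f)

/-- Boundedness of the Hardy–Littlewood maximal operator on the weighted Morrey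
space attached to `F`, with constant `C`. -/
def maximalBoundedOnMorrey {n : ℕ} (F : Set (Cube n)) (lam p : ℝ)
    (w : EuclideanSpace ℝ (Fin n) → ℝ) (C : ℝ) : Prop :=
  ∀ f : EuclideanSpace ℝ (Fin n) → ℝ,
    morreyNormE F lam p w (maximal f) ≤ ENNReal.ofReal C * morreyNorm F lam p w f


section Aux

variable {n : ℕ}

lemma setDist_le {A B : Set (EuclideanSpace ℝ (Fin n))} {x y : EuclideanSpace ℝ (Fin n)}
    (hx : x ∈ A) (hy : y ∈ B) : setDist A B ≤ dist x y := by
  have h1 : BddBelow (Set.range fun y : B => dist x (y : EuclideanSpace ℝ (Fin n))) :=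
    ⟨0, by rintro _ ⟨z, rfl⟩; exact dist_nonneg⟩
  have h2 : BddBelow (Set.range fun x : A =>
      ⨅ y : B, dist (x : EuclideanSpace ℝ (Fin n)) (y : EuclideanSpace ℝ (Fin n))) := by
    refine ⟨0, ?_⟩
    rintro _ ⟨z, rfl⟩
    exact Real.iInf_nonneg fun y => dist_nonneg
  calc setDist A B ≤ ⨅ y : B, dist x (y : EuclideanSpace ℝ (Fin n)) := ciInf_le h2 ⟨x, hx⟩
    _ ≤ dist x y := ciInf_le h1 ⟨y, hy⟩

lemma le_setDist {A B : Set (EuclideanSpace ℝ (Fin n))} (hA : A.Nonempty) (hB : B.Nonempty)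
    {c : ℝ} (h : ∀ x ∈ A, ∀ y ∈ B, c ≤ dist x y) : c ≤ setDist A B := by
  have : Nonempty A := hA.to_subtype
  have : Nonempty B := hB.to_subtype
  exact le_ciInf fun x => le_ciInf fun y => h x x.2 y y.2

lemma setDist_nonneg {A B : Set (EuclideanSpace ℝ (Fin n))} (hA : A.Nonempty)
    (hB : B.Nonempty) : 0 ≤ setDist A B :=
  le_setDist hA hB fun _ _ _ _ => dist_nonneg

lemma setDist_mono {A A' B : Set (EuclideanSpace ℝ (Fin n))} (hA : A.Nonempty)
    (hB : B.Nonempty) (h : A ⊆ A') : setDist A' B ≤ setDist A B :=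
  le_setDist hA hB fun x hx y hy => setDist_le (h hx) hy

lemma Cube.center_mem (Q : Cube n) : Q.center ∈ Q.toSet := by
  intro i; rw [sub_self, abs_zero]; linarith [Q.side_pos]

lemma Cube.toSet_nonempty (Q : Cube n) : Q.toSet.Nonempty := ⟨Q.center, Q.center_mem⟩

lemma Cube.diam_pos (hn : 0 < n) (Q : Cube n) : 0 < Q.diam := by
  have : (0:ℝ) < Real.sqrt n := Real.sqrt_pos.2 (by exact_mod_cast hn)
  exact mul_pos this Q.side_pos

lemma Cube.diam_nonneg (Q : Cube n) : 0 ≤ Q.diam :=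
  mul_nonneg (Real.sqrt_nonneg _) Q.side_pos.le

lemma dist_le_of_coords {x y : EuclideanSpace ℝ (Fin n)} {M : ℝ} (hM : 0 ≤ M)
    (h : ∀ i, |x i - y i| ≤ M) : dist x y ≤ Real.sqrt n * M := by
  rw [EuclideanSpace.dist_eq]
  have : ∑ i, dist (x i) (y i) ^ 2 ≤ ∑ _i : Fin n, M ^ 2 := by
    refine Finset.sum_le_sum fun i _ => ?_
    have := h i
    rw [Real.dist_eq]
    nlinarith [abs_nonneg (x i - y i)]
  calc Real.sqrt (∑ i, dist (x i) (y i) ^ 2) ≤ Real.sqrt (∑ _i : Fin n, M ^ 2) :=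
        Real.sqrt_le_sqrt this
    _ = Real.sqrt (n * M ^ 2) := by rw [Finset.sum_const, Finset.card_univ, Fintype.card_fin]; ring_nf
    _ = Real.sqrt n * M := by
        rw [Real.sqrt_mul (by positivity), Real.sqrt_sq hM]

lemma coord_le_dist {x y : EuclideanSpace ℝ (Fin n)} (i : Fin n) :
    |x i - y i| ≤ dist x y := by
  rw [EuclideanSpace.dist_eq]
  have h1 : dist (x i) (y i) ^ 2 ≤ ∑ j, dist (x j) (y j) ^ 2 :=
    Finset.single_le_sum (f := fun j => dist (x j) (y j) ^ 2) (fun j _ => sq_nonneg _)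
      (Finset.mem_univ i)
  calc |x i - y i| = Real.sqrt (dist (x i) (y i) ^ 2) := by
        rw [Real.sqrt_sq dist_nonneg, Real.dist_eq]
    _ ≤ _ := Real.sqrt_le_sqrt h1

lemma dist_in_cube {Q : Cube n} {x y : EuclideanSpace ℝ (Fin n)} (hx : x ∈ Q.toSet)
    (hy : y ∈ Q.toSet) : dist x y ≤ Q.diam := by
  refine dist_le_of_coords Q.side_pos.le fun i => ?_
  have h1 := hx i; have h2 := hy i
  have : x i - y i = (x i - Q.center i) - (y i - Q.center i) := by ring
  rw [this]
  calc |(x i - Q.center i) - (y i - Q.center i)| ≤ |x i - Q.center i| + |y i - Q.center i| :=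
        abs_sub _ _
    _ ≤ Q.side / 2 + Q.side / 2 := add_le_add h1 h2
    _ = Q.side := by ring

end Aux


section Aux2

variable {n : ℕ}

/-- Generic Morrey-type norm for an `ℝ≥0∞`-valued integrand. -/
def nrm (F : Set (Cube n)) (lam p : ℝ) (h : EuclideanSpace ℝ (Fin n) → ℝ≥0∞) : ℝ≥0∞ :=
  ⨆ (Q : Cube n) (_ : Q ∈ F),
    ((ENNReal.ofReal (Q.vol ^ lam))⁻¹ * ∫⁻ x in Q.toSet, h x) ^ (1 / p)

lemma morreyNorm_eq_nrm (F : Set (Cube n)) (lam p : ℝ)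
    (w f : EuclideanSpace ℝ (Fin n) → ℝ) :
    morreyNorm F lam p w f =
      nrm F lam p (fun x => (ENNReal.ofReal |f x|) ^ p * ENNReal.ofReal (w x)) := rfl

lemma Cube.vol_pos (Q : Cube n) : 0 < Q.vol := pow_pos Q.side_pos n

lemma Cube.child_toSet_subset (Q : Cube n) (s : Fin n → Bool) :
    (Q.child s).toSet ⊆ Q.toSet := by
  intro x hx i
  have h := hx i
  simp only [Cube.child] at h
  have hs := Q.side_pos
  by_cases hsi : s i <;> simp [hsi] at h <;> rw [abs_le] at h ⊢ <;>
    constructor <;> linarith [h.1, h.2]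

lemma Cube.child_diam (Q : Cube n) (s : Fin n → Bool) :
    (Q.child s).diam = Q.diam / 2 := by
  simp only [Cube.diam, Cube.child]; ring

lemma Cube.child_vol (Q : Cube n) (s : Fin n → Bool) :
    (Q.child s).vol = Q.vol / 2 ^ n := by
  simp only [Cube.vol, Cube.child, div_pow]

lemma Cube.subset_iUnion_child (Q : Cube n) :
    Q.toSet ⊆ ⋃ s : Fin n → Bool, (Q.child s).toSet := by
  intro x hx
  refine Set.mem_iUnion.2 ⟨fun i => decide (Q.center i ≤ x i), fun i => ?_⟩
  have h := hx i
  rw [abs_le] at h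
  have hs := Q.side_pos
  by_cases hle : Q.center i ≤ x i <;>
    simp [Cube.child, hle, abs_le] <;> constructor <;> linarith [h.1, h.2]

lemma child_mem_whitney {Ω : Set (EuclideanSpace ℝ (Fin n))} (hΩ : Ω.Nonempty)
    {a b : ℝ} {Q : Cube n} (hQ : Q ∈ whitneyFamily Ω a b) (s : Fin n → Bool) :
    Q.child s ∈ whitneyFamily Ω (2 * a) (2 * b + 2) := by
  obtain ⟨h1, h2⟩ := hQ
  have hsub := Q.child_toSet_subset s
  have hmono := setDist_mono (Q.child s).toSet_nonempty hΩ hsub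
  have hccm : (Q.child s).center ∈ Q.toSet := hsub (Q.child s).center_mem
  have hup : setDist (Q.child s).toSet Ω ≤ setDist Q.toSet Ω + Q.diam := by
    have key : ∀ x ∈ Q.toSet, ∀ y ∈ Ω,
        setDist (Q.child s).toSet Ω - Q.diam ≤ dist x y := by
      intro x hx y hy
      have hA : setDist (Q.child s).toSet Ω ≤ dist (Q.child s).center y :=
        setDist_le (Q.child s).center_mem hy
      have hB : dist (Q.child s).center y ≤ dist (Q.child s).center x + dist x y :=
        dist_triangle _ _ _
      have hC : dist (Q.child s).center x ≤ Q.diam := dist_in_cube hccm hx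
      linarith
    have := le_setDist Q.toSet_nonempty hΩ key
    linarith
  constructor
  · rw [Q.child_diam]
    calc (2 * a) * (Q.diam / 2) = a * Q.diam := by ring
      _ ≤ setDist Q.toSet Ω := h1
      _ ≤ _ := hmono
  · rw [Q.child_diam]
    calc setDist (Q.child s).toSet Ω ≤ setDist Q.toSet Ω + Q.diam := hup
      _ ≤ b * Q.diam + Q.diam := by linarith
      _ = (2 * b + 2) * (Q.diam / 2) := by ring

lemma rpow_term_le {c : ℝ} (hc : 0 < c) {A B : ℝ≥0∞} (hAB : A ≤ ENNReal.ofReal c * B)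
    {p : ℝ} (hp : 1 ≤ p) : A ^ (1 / p) ≤ ENNReal.ofReal (c ^ (1 / p)) * B ^ (1 / p) := by
  have hp0 : 0 ≤ 1 / p := by positivity
  calc A ^ (1 / p) ≤ (ENNReal.ofReal c * B) ^ (1 / p) := ENNReal.rpow_le_rpow hAB hp0
    _ = (ENNReal.ofReal c) ^ (1 / p) * B ^ (1 / p) := ENNReal.mul_rpow_of_nonneg _ _ hp0
    _ = ENNReal.ofReal (c ^ (1 / p)) * B ^ (1 / p) := by
        rw [ENNReal.ofReal_rpow_of_pos hc]

lemma nrm_step {Ω : Set (EuclideanSpace ℝ (Fin n))} (hΩ : Ω.Nonempty) {a b lam p : ℝ}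
    (hlam0 : 0 < lam) (hp : 1 ≤ p) (h : EuclideanSpace ℝ (Fin n) → ℝ≥0∞) :
    nrm (whitneyFamily Ω a b) lam p h ≤
      ENNReal.ofReal (((2:ℝ) ^ n) ^ ((1 - lam) / p)) *
        nrm (whitneyFamily Ω (2 * a) (2 * b + 2)) lam p h := by
  set X : ℝ := (2:ℝ) ^ n with hX
  have hXpos : 0 < X := by positivity
  refine iSup₂_le fun Q hQ => ?_
  obtain ⟨s₀, hs₀⟩ := Finite.exists_max (fun s : Fin n → Bool => ∫⁻ x in (Q.child s).toSet, h x)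
  set I : ℝ≥0∞ := ∫⁻ x in (Q.child s₀).toSet, h x with hI
  set V' : ℝ≥0∞ := ENNReal.ofReal ((Q.child s₀).vol ^ lam) with hV'
  have hV'pos : 0 < (Q.child s₀).vol ^ lam := Real.rpow_pos_of_pos (Q.child s₀).vol_pos _
  -- integral bound
  have hint : (∫⁻ x in Q.toSet, h x) ≤ (2 ^ n : ℕ) * I := by
    calc (∫⁻ x in Q.toSet, h x)
        ≤ ∫⁻ x in ⋃ s : Fin n → Bool, (Q.child s).toSet, h x :=
          lintegral_mono_set Q.subset_iUnion_child
      _ ≤ ∑' s : Fin n → Bool, ∫⁻ x in (Q.child s).toSet, h x := lintegral_iUnion_le _ _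
      _ = ∑ s : Fin n → Bool, ∫⁻ x in (Q.child s).toSet, h x := tsum_fintype _
      _ ≤ (Finset.univ : Finset (Fin n → Bool)).card • I :=
          Finset.sum_le_card_nsmul _ _ _ fun s _ => hs₀ s
      _ = (2 ^ n : ℕ) * I := by
          rw [nsmul_eq_mul, Finset.card_univ]
          norm_num [Fintype.card_fun]
  -- volume relation
  have hvol : Q.vol ^ lam = (Q.child s₀).vol ^ lam * X ^ lam := by
    rw [Q.child_vol, Real.div_rpow Q.vol_pos.le hXpos.le]
    field_simp
  have hVsplit : (ENNReal.ofReal (Q.vol ^ lam))⁻¹ =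
      V'⁻¹ * (ENNReal.ofReal (X ^ lam))⁻¹ := by
    rw [hvol, ENNReal.ofReal_mul hV'pos.le, ENNReal.mul_inv]
    · exact Or.inl (ne_of_gt (ENNReal.ofReal_pos.2 hV'pos))
    · exact Or.inl ENNReal.ofReal_ne_top
  have hconst : (ENNReal.ofReal (X ^ lam))⁻¹ * (2 ^ n : ℕ) =
      ENNReal.ofReal (X ^ (1 - lam)) := by
    have h1 : ((2 ^ n : ℕ) : ℝ≥0∞) = ENNReal.ofReal X := by
      rw [hX]; push_cast; rw [ENNReal.ofReal_pow (by norm_num)]; norm_num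
    rw [h1, mul_comm, ← ENNReal.ofReal_inv_of_pos (Real.rpow_pos_of_pos hXpos _),
      ← ENNReal.ofReal_mul hXpos.le]
    congr 1
    rw [Real.rpow_sub hXpos, Real.rpow_one, div_eq_mul_inv]
  have hmain : (ENNReal.ofReal (Q.vol ^ lam))⁻¹ * ∫⁻ x in Q.toSet, h x ≤
      ENNReal.ofReal (X ^ (1 - lam)) * (V'⁻¹ * I) := by
    calc (ENNReal.ofReal (Q.vol ^ lam))⁻¹ * ∫⁻ x in Q.toSet, h x
        ≤ (ENNReal.ofReal (Q.vol ^ lam))⁻¹ * ((2 ^ n : ℕ) * I) := by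
          exact mul_le_mul_right hint _
      _ = (V'⁻¹ * (ENNReal.ofReal (X ^ lam))⁻¹) * ((2 ^ n : ℕ) * I) := by rw [hVsplit]
      _ = ((ENNReal.ofReal (X ^ lam))⁻¹ * (2 ^ n : ℕ)) * (V'⁻¹ * I) := by ring
      _ = ENNReal.ofReal (X ^ (1 - lam)) * (V'⁻¹ * I) := by rw [hconst]
  have hterm := rpow_term_le (Real.rpow_pos_of_pos hXpos _) hmain hp
  have hmem := child_mem_whitney hΩ hQ s₀
  have hle : (V'⁻¹ * I) ^ (1 / p) ≤ nrm (whitneyFamily Ω (2 * a) (2 * b + 2)) lam p h :=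
    le_iSup₂ (f := fun (Q' : Cube n) (_ : Q' ∈ whitneyFamily Ω (2 * a) (2 * b + 2)) =>
      ((ENNReal.ofReal (Q'.vol ^ lam))⁻¹ * ∫⁻ x in Q'.toSet, h x) ^ (1 / p)) (Q.child s₀) hmem
  calc ((ENNReal.ofReal (Q.vol ^ lam))⁻¹ * ∫⁻ x in Q.toSet, h x) ^ (1 / p)
      ≤ ENNReal.ofReal ((X ^ (1 - lam)) ^ (1 / p)) * (V'⁻¹ * I) ^ (1 / p) := hterm
    _ ≤ ENNReal.ofReal ((X ^ (1 - lam)) ^ (1 / p)) *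
        nrm (whitneyFamily Ω (2 * a) (2 * b + 2)) lam p h := mul_le_mul_right hle _
    _ = ENNReal.ofReal (X ^ ((1 - lam) / p)) *
        nrm (whitneyFamily Ω (2 * a) (2 * b + 2)) lam p h := by
        congr 2
        rw [← Real.rpow_mul hXpos.le, mul_one_div]

end Aux2


section Aux3

variable {n : ℕ}

/-- The concentric dilation of a cube as a set, for an arbitrary real factor. -/
def dilSet (Q : Cube n) (t : ℝ) : Set (EuclideanSpace ℝ (Fin n)) :=
  {x | ∀ i, |x i - Q.center i| ≤ t * Q.side / 2}

/-- Distance from the dilated cube to `Ω`, as a function of the dilation factor. -/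
def phiD (Q : Cube n) (Ω : Set (EuclideanSpace ℝ (Fin n))) (t : ℝ) : ℝ :=
  setDist (dilSet Q t) Ω

lemma dilate_toSet (Q : Cube n) (t : ℝ) (ht : 0 < t) :
    (Q.dilate t ht).toSet = dilSet Q t := rfl

lemma dilate_diam (Q : Cube n) (t : ℝ) (ht : 0 < t) :
    (Q.dilate t ht).diam = Real.sqrt n * (t * Q.side) := rfl

lemma dilSet_one (Q : Cube n) : dilSet Q 1 = Q.toSet := by
  ext x; simp [dilSet, Cube.toSet]

lemma center_mem_dilSet (Q : Cube n) {t : ℝ} (ht : 0 ≤ t) : Q.center ∈ dilSet Q t := by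
  intro i
  rw [sub_self, abs_zero]
  have := Q.side_pos
  positivity

lemma dilSet_nonempty (Q : Cube n) {t : ℝ} (ht : 0 ≤ t) : (dilSet Q t).Nonempty :=
  ⟨Q.center, center_mem_dilSet Q ht⟩

lemma dilSet_mono (Q : Cube n) {u t : ℝ} (hut : u ≤ t) : dilSet Q u ⊆ dilSet Q t := by
  intro x hx i
  have := Q.side_pos
  exact (hx i).trans (by nlinarith)

lemma phiD_anti {Q : Cube n} {Ω : Set (EuclideanSpace ℝ (Fin n))} (hΩ : Ω.Nonempty)
    {u t : ℝ} (hu : 0 ≤ u) (hut : u ≤ t) : phiD Q Ω t ≤ phiD Q Ω u :=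
  setDist_mono (dilSet_nonempty Q hu) hΩ (dilSet_mono Q hut)

lemma phiD_lip {Q : Cube n} {Ω : Set (EuclideanSpace ℝ (Fin n))} (hΩ : Ω.Nonempty)
    {u t : ℝ} (hu : 0 ≤ u) (hut : u ≤ t) :
    phiD Q Ω u ≤ phiD Q Ω t + (t - u) * Q.diam / 2 := by
  have hs := Q.side_pos
  have hm0 : 0 ≤ u * Q.side / 2 := by positivity
  have key : ∀ x ∈ dilSet Q t, ∀ y ∈ Ω,
      phiD Q Ω u - (t - u) * Q.diam / 2 ≤ dist x y := by
    intro x hx y hy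
    have hx'mem : (WithLp.toLp 2 (fun i => Q.center i + max (-(u * Q.side / 2))
        (min (x i - Q.center i) (u * Q.side / 2))) : EuclideanSpace ℝ (Fin n)) ∈ dilSet Q u := by
      intro i
      show |Q.center i + _ - Q.center i| ≤ _
      rw [add_sub_cancel_left, abs_le]
      refine ⟨le_max_left _ _, max_le (by linarith) (min_le_right _ _)⟩
    set x' : EuclideanSpace ℝ (Fin n) :=
      WithLp.toLp 2 (fun i => Q.center i + max (-(u * Q.side / 2))
        (min (x i - Q.center i) (u * Q.side / 2))) with hx'
    have hcoord : ∀ i, |x i - x' i| ≤ (t - u) * Q.side / 2 := by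
      intro i
      have hv := hx i
      rw [abs_le] at hv
      show |x i - (Q.center i + _)| ≤ _
      have heq : x i - (Q.center i + max (-(u * Q.side / 2))
          (min (x i - Q.center i) (u * Q.side / 2))) =
          (x i - Q.center i) - max (-(u * Q.side / 2))
            (min (x i - Q.center i) (u * Q.side / 2)) := by ring
      rw [heq]
      rcases le_total (x i - Q.center i) (u * Q.side / 2) with h1 | h1
      · rcases le_total (-(u * Q.side / 2)) (x i - Q.center i) with h2 | h2
        · rw [min_eq_left h1, max_eq_right h2, sub_self, abs_zero]
          nlinarith
        · rw [min_eq_left h1, max_eq_left h2, abs_le]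
          constructor <;> nlinarith [hv.1, hv.2]
      · rw [min_eq_right h1, max_eq_right (by linarith : -(u * Q.side / 2) ≤ u * Q.side / 2),
          abs_le]
        constructor <;> nlinarith [hv.1, hv.2]
    have hdxx' : dist x x' ≤ Real.sqrt n * ((t - u) * Q.side / 2) :=
      dist_le_of_coords (by nlinarith) hcoord
    have h1 : phiD Q Ω u ≤ dist x' y := setDist_le hx'mem hy
    have h2 : dist x' y ≤ dist x' x + dist x y := dist_triangle _ _ _
    have h3 : dist x' x = dist x x' := dist_comm _ _
    have h4 : Real.sqrt n * ((t - u) * Q.side / 2) = (t - u) * Q.diam / 2 := by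
      rw [Cube.diam]; ring
    rw [h4] at hdxx'
    rw [h3] at h2
    linarith
  have h5 : phiD Q Ω u - (t - u) * Q.diam / 2 ≤ phiD Q Ω t :=
    le_setDist (dilSet_nonempty Q (hu.trans hut)) hΩ key
  linarith

lemma phiD_continuousOn {Q : Cube n} {Ω : Set (EuclideanSpace ℝ (Fin n))} (hΩ : Ω.Nonempty)
    (T : ℝ) : ContinuousOn (phiD Q Ω) (Set.Icc 1 T) := by
  have hd0 : 0 ≤ Q.diam := Q.diam_nonneg
  refine LipschitzOnWith.continuousOn (K := Real.toNNReal (Q.diam / 2)) ?_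
  rw [lipschitzOnWith_iff_dist_le_mul]
  intro u hu t ht
  have h01 : (0:ℝ) ≤ 1 := zero_le_one
  have hcoe : (Real.toNNReal (Q.diam / 2) : ℝ) = Q.diam / 2 :=
    Real.coe_toNNReal _ (by linarith)
  rw [Real.dist_eq, Real.dist_eq, hcoe]
  rcases le_total u t with hut | hut
  · have hA := phiD_anti (Q := Q) hΩ (h01.trans hu.1) hut
    have hB := phiD_lip (Q := Q) hΩ (h01.trans hu.1) hut
    rw [abs_of_nonneg (by linarith : (0:ℝ) ≤ phiD Q Ω u - phiD Q Ω t),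
      abs_of_nonpos (by linarith : u - t ≤ 0)]
    nlinarith
  · have hA := phiD_anti (Q := Q) hΩ (h01.trans ht.1) hut
    have hB := phiD_lip (Q := Q) hΩ (h01.trans ht.1) hut
    rw [abs_of_nonpos (by linarith : phiD Q Ω u - phiD Q Ω t ≤ 0),
      abs_of_nonneg (by linarith : (0:ℝ) ≤ u - t)]
    nlinarith

lemma exists_dilate_mem {Ω : Set (EuclideanSpace ℝ (Fin n))} (hn : 0 < n) (hΩ : Ω.Nonempty)
    {r₁ r₂ α₁ α₂ : ℝ} (hr₂ : 0 < r₂) (hr₁₂ : r₁ ≤ r₂) (hα₁ : r₁ ≤ α₁) (hα₂ : r₂ ≤ α₂)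
    {Q : Cube n} (hQ : Q ∈ whitneyFamily Ω α₁ α₂) :
    ∃ t : ℝ, 1 ≤ t ∧ t ≤ α₂ / r₂ ∧
      ∀ ht : (0:ℝ) < t, Q.dilate t ht ∈ whitneyFamily Ω r₁ r₂ := by
  obtain ⟨ω, hω⟩ := hΩ
  have hΩne : Ω.Nonempty := ⟨ω, hω⟩
  have hs := Q.side_pos
  have hsq : (0:ℝ) < Real.sqrt n := Real.sqrt_pos.2 (by exact_mod_cast hn)
  have hd : 0 < Q.diam := Q.diam_pos hn
  have hφ1 : phiD Q Ω 1 = setDist Q.toSet Ω := by rw [phiD, dilSet_one]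
  have hφ1low : α₁ * Q.diam ≤ phiD Q Ω 1 := by rw [hφ1]; exact hQ.1
  have hφ1up : phiD Q Ω 1 ≤ α₂ * Q.diam := by rw [hφ1]; exact hQ.2
  by_cases hcase : phiD Q Ω 1 ≤ r₂ * Q.diam
  · refine ⟨1, le_refl _, ?_, ?_⟩
    · rw [le_div_iff₀ hr₂]; linarith
    · intro ht
      have hds : setDist (Q.dilate 1 ht).toSet Ω = phiD Q Ω 1 := by
        rw [dilate_toSet]; rfl
      have hdm : (Q.dilate 1 ht).diam = Q.diam := by
        rw [dilate_diam, Cube.diam]; ring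
      constructor
      · rw [hds, hdm]
        calc r₁ * Q.diam ≤ α₁ * Q.diam := by nlinarith
          _ ≤ phiD Q Ω 1 := hφ1low
      · rw [hds, hdm]; exact hcase
  · push_neg at hcase
    have hdω : 0 ≤ dist ω Q.center := dist_nonneg
    set T : ℝ := 1 + 2 / Q.side * dist ω Q.center with hT
    have hT1 : 1 ≤ T := by
      rw [hT]
      have : 0 ≤ 2 / Q.side * dist ω Q.center := by positivity
      linarith
    have hωT : ω ∈ dilSet Q T := by
      intro i
      have h1 : |ω i - Q.center i| ≤ dist ω Q.center := coord_le_dist i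
      have h2 : dist ω Q.center ≤ T * Q.side / 2 := by
        have : T * Q.side / 2 = Q.side / 2 + dist ω Q.center := by
          rw [hT]; field_simp
        rw [this]; linarith
      exact h1.trans h2
    have hφT : phiD Q Ω T ≤ 0 := by
      have h1 : phiD Q Ω T ≤ dist ω ω := setDist_le hωT hω
      rwa [dist_self] at h1
    set g : ℝ → ℝ := fun t => phiD Q Ω t - r₂ * (Real.sqrt n * (t * Q.side)) with hg
    have hg1 : 0 ≤ g 1 := by
      have hh : Real.sqrt n * (1 * Q.side) = Q.diam := by rw [Cube.diam]; ring
      show (0:ℝ) ≤ phiD Q Ω 1 - r₂ * (Real.sqrt n * (1 * Q.side))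
      rw [hh]
      linarith
    have hgT : g T ≤ 0 := by
      show phiD Q Ω T - r₂ * (Real.sqrt n * (T * Q.side)) ≤ 0
      have : 0 ≤ r₂ * (Real.sqrt n * (T * Q.side)) := by positivity
      linarith
    have hgcont : ContinuousOn g (Set.Icc 1 T) := by
      apply (phiD_continuousOn hΩne T).sub
      exact Continuous.continuousOn (by continuity)
    have h0mem : (0:ℝ) ∈ Set.Icc (g T) (g 1) := Set.mem_Icc.2 ⟨hgT, hg1⟩
    obtain ⟨t, htmem, hgt⟩ := intermediate_value_Icc' hT1 hgcont h0mem
    have ht1 : 1 ≤ t := htmem.1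
    have ht0 : (0:ℝ) < t := by linarith
    have hφt : phiD Q Ω t = r₂ * (Real.sqrt n * (t * Q.side)) := by
      have hz : phiD Q Ω t - r₂ * (Real.sqrt n * (t * Q.side)) = 0 := hgt
      linarith
    refine ⟨t, ht1, ?_, ?_⟩
    · rw [le_div_iff₀ hr₂]
      have h1 : phiD Q Ω t ≤ phiD Q Ω 1 := phiD_anti hΩne zero_le_one ht1
      have h2 : r₂ * (Real.sqrt n * (t * Q.side)) ≤ α₂ * (Real.sqrt n * Q.side) := by
        rw [← hφt]
        calc phiD Q Ω t ≤ phiD Q Ω 1 := h1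
          _ ≤ α₂ * Q.diam := hφ1up
          _ = α₂ * (Real.sqrt n * Q.side) := by rw [Cube.diam]
      nlinarith [mul_pos hsq hs]
    · intro ht'
      have hds : setDist (Q.dilate t ht').toSet Ω = phiD Q Ω t := by
        rw [dilate_toSet]; rfl
      have hdm : (Q.dilate t ht').diam = Real.sqrt n * (t * Q.side) := dilate_diam Q t ht'
      constructor
      · rw [hds, hdm, hφt]
        have h0 : 0 ≤ Real.sqrt n * (t * Q.side) := by positivity
        nlinarith
      · rw [hds, hdm, hφt]

end Aux3


section Aux4

variable {n : ℕ}

lemma nrm_dilate_le {Ω : Set (EuclideanSpace ℝ (Fin n))} (hn : 0 < n) (hΩ : Ω.Nonempty)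
    {r₁ r₂ α₁ α₂ lam p : ℝ} (hr₂ : 0 < r₂) (hr₁₂ : r₁ ≤ r₂) (hα₁ : r₁ ≤ α₁) (hα₂ : r₂ ≤ α₂)
    (hlam0 : 0 < lam) (hp : 1 ≤ p) (h : EuclideanSpace ℝ (Fin n) → ℝ≥0∞) :
    nrm (whitneyFamily Ω α₁ α₂) lam p h ≤
      ENNReal.ofReal ((((α₂ / r₂) ^ n) ^ lam) ^ (1 / p)) *
        nrm (whitneyFamily Ω r₁ r₂) lam p h := by
  have hT' : (1:ℝ) ≤ α₂ / r₂ := by rw [le_div_iff₀ hr₂]; linarith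
  refine iSup₂_le fun Q hQ => ?_
  obtain ⟨t, ht1, htle, hmem⟩ := exists_dilate_mem hn hΩ hr₂ hr₁₂ hα₁ hα₂ hQ
  have ht0 : (0:ℝ) < t := lt_of_lt_of_le one_pos ht1
  have hmem' := hmem ht0
  have hs := Q.side_pos
  have hsub : Q.toSet ⊆ (Q.dilate t ht0).toSet := by
    intro x hx
    intro i
    have hxi := hx i
    show |x i - Q.center i| ≤ t * Q.side / 2
    nlinarith
  have hint : (∫⁻ x in Q.toSet, h x) ≤ ∫⁻ x in (Q.dilate t ht0).toSet, h x :=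
    lintegral_mono_set hsub
  have hvol : (Q.dilate t ht0).vol = t ^ n * Q.vol := by
    show (t * Q.side) ^ n = t ^ n * Q.side ^ n
    rw [mul_pow]
  have hvp : (0:ℝ) < Q.vol := Q.vol_pos
  have htn : (0:ℝ) < t ^ n := by positivity
  have hclam : (0:ℝ) < (t ^ n) ^ lam := Real.rpow_pos_of_pos htn _
  have hvlam : (Q.dilate t ht0).vol ^ lam = (t ^ n) ^ lam * Q.vol ^ lam := by
    rw [hvol, Real.mul_rpow htn.le hvp.le]
  have hVrel : (ENNReal.ofReal (Q.vol ^ lam))⁻¹ =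
      ENNReal.ofReal ((t ^ n) ^ lam) * (ENNReal.ofReal ((Q.dilate t ht0).vol ^ lam))⁻¹ := by
    rw [hvlam, ENNReal.ofReal_mul hclam.le,
      ENNReal.mul_inv (Or.inl (ne_of_gt (ENNReal.ofReal_pos.2 hclam)))
        (Or.inl ENNReal.ofReal_ne_top), ← mul_assoc,
      ENNReal.mul_inv_cancel (ne_of_gt (ENNReal.ofReal_pos.2 hclam)) ENNReal.ofReal_ne_top,
      one_mul]
  have hmono_c : ((t:ℝ) ^ n) ^ lam ≤ ((α₂ / r₂) ^ n) ^ lam :=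
    Real.rpow_le_rpow htn.le (pow_le_pow_left₀ (by linarith) htle n) hlam0.le
  have hTpos : (0:ℝ) < ((α₂ / r₂) ^ n) ^ lam :=
    Real.rpow_pos_of_pos (by positivity) _
  have hmain : (ENNReal.ofReal (Q.vol ^ lam))⁻¹ * ∫⁻ x in Q.toSet, h x ≤
      ENNReal.ofReal (((α₂ / r₂) ^ n) ^ lam) *
        ((ENNReal.ofReal ((Q.dilate t ht0).vol ^ lam))⁻¹ *
          ∫⁻ x in (Q.dilate t ht0).toSet, h x) := by
    calc (ENNReal.ofReal (Q.vol ^ lam))⁻¹ * ∫⁻ x in Q.toSet, h x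
        = ENNReal.ofReal ((t ^ n) ^ lam) *
            ((ENNReal.ofReal ((Q.dilate t ht0).vol ^ lam))⁻¹ * ∫⁻ x in Q.toSet, h x) := by
          rw [hVrel]; ring
      _ ≤ ENNReal.ofReal ((t ^ n) ^ lam) *
            ((ENNReal.ofReal ((Q.dilate t ht0).vol ^ lam))⁻¹ *
              ∫⁻ x in (Q.dilate t ht0).toSet, h x) := by
          exact mul_le_mul_right (mul_le_mul_right hint _) _
      _ ≤ _ := mul_le_mul_left (ENNReal.ofReal_le_ofReal hmono_c) _
  have hterm := rpow_term_le hTpos hmain hp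
  have hle : ((ENNReal.ofReal ((Q.dilate t ht0).vol ^ lam))⁻¹ *
        ∫⁻ x in (Q.dilate t ht0).toSet, h x) ^ (1 / p) ≤
      nrm (whitneyFamily Ω r₁ r₂) lam p h :=
    le_iSup₂ (f := fun (Q' : Cube n) (_ : Q' ∈ whitneyFamily Ω r₁ r₂) =>
      ((ENNReal.ofReal (Q'.vol ^ lam))⁻¹ * ∫⁻ x in Q'.toSet, h x) ^ (1 / p))
      (Q.dilate t ht0) hmem'
  exact hterm.trans (mul_le_mul_right hle _)

/-- The recursively dilated upper Whitney parameter. -/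
def whitB (r₂ : ℝ) : ℕ → ℝ
  | 0 => r₂
  | j + 1 => 2 * whitB r₂ j + 2

lemma whitB_ge (r₂ : ℝ) : ∀ j : ℕ, 2 ^ j * r₂ ≤ whitB r₂ j := by
  intro j
  induction j with
  | zero => simp [whitB]
  | succ i ih =>
    have : (2:ℝ) ^ (i + 1) * r₂ = 2 * (2 ^ i * r₂) := by ring
    rw [this]
    show _ ≤ 2 * whitB r₂ i + 2
    linarith

lemma nrm_iter {Ω : Set (EuclideanSpace ℝ (Fin n))} (hΩ : Ω.Nonempty) {r₁ r₂ lam p : ℝ}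
    (hlam0 : 0 < lam) (hp : 1 ≤ p) (h : EuclideanSpace ℝ (Fin n) → ℝ≥0∞) (k : ℕ) :
    nrm (whitneyFamily Ω r₁ r₂) lam p h ≤
      ENNReal.ofReal (((2:ℝ) ^ n) ^ ((1 - lam) / p)) ^ k *
        nrm (whitneyFamily Ω (2 ^ k * r₁) (whitB r₂ k)) lam p h := by
  induction k with
  | zero => simp [whitB]
  | succ j ih =>
    have hstep := nrm_step (a := 2 ^ j * r₁) (b := whitB r₂ j) hΩ hlam0 hp h
    have e1 : 2 * ((2:ℝ) ^ j * r₁) = 2 ^ (j + 1) * r₁ := by ring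
    have e2 : 2 * whitB r₂ j + 2 = whitB r₂ (j + 1) := rfl
    rw [e1, e2] at hstep
    calc nrm (whitneyFamily Ω r₁ r₂) lam p h
        ≤ ENNReal.ofReal (((2:ℝ) ^ n) ^ ((1 - lam) / p)) ^ j *
            nrm (whitneyFamily Ω (2 ^ j * r₁) (whitB r₂ j)) lam p h := ih
      _ ≤ ENNReal.ofReal (((2:ℝ) ^ n) ^ ((1 - lam) / p)) ^ j *
            (ENNReal.ofReal (((2:ℝ) ^ n) ^ ((1 - lam) / p)) *
              nrm (whitneyFamily Ω (2 ^ (j + 1) * r₁) (whitB r₂ (j + 1))) lam p h) :=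
          mul_le_mul_right hstep _
      _ = _ := by rw [pow_succ]; ring

end Aux4

/-- Lemma `eqst`: for any `0 < r₁ < r₂ < ∞` there are `1 < α₁ < α₂ < ∞`
with `‖f‖_{M^p_{λ,W_{r₁,r₂}}(w)} ≃ ‖f‖_{M^p_{λ,W_{α₁,α₂}}(w)}`. -/
theorem statement4 {n : ℕ} (hn : 0 < n) (Ω : Set (EuclideanSpace ℝ (Fin n)))
    (hΩne : Ω.Nonempty) (hΩcl : IsClosed Ω) (lam p : ℝ) (hlam0 : 0 < lam)
    (hlam1 : lam < 1) (hp : 1 ≤ p) (w : EuclideanSpace ℝ (Fin n) → ℝ)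
    (hw : ∀ x, 0 ≤ w x) (r₁ r₂ : ℝ) (hr₁ : 0 < r₁) (hr₁₂ : r₁ < r₂) :
    ∃ α₁ α₂ c C : ℝ, 1 < α₁ ∧ α₁ < α₂ ∧ 0 < c ∧ 0 < C ∧
      ∀ f : EuclideanSpace ℝ (Fin n) → ℝ,
        ENNReal.ofReal c * morreyNorm (whitneyFamily Ω α₁ α₂) lam p w f ≤
            morreyNorm (whitneyFamily Ω r₁ r₂) lam p w f ∧
          morreyNorm (whitneyFamily Ω r₁ r₂) lam p w f ≤
            ENNReal.ofReal C * morreyNorm (whitneyFamily Ω α₁ α₂) lam p w f := by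
  have hr₂ : 0 < r₂ := hr₁.trans hr₁₂
  obtain ⟨k, hk⟩ := pow_unbounded_of_one_lt (1 / r₁) (one_lt_two (α := ℝ))
  have h2k : (1:ℝ) ≤ 2 ^ k := one_le_pow₀ (by norm_num)
  have h2kpos : (0:ℝ) < 2 ^ k := by positivity
  set α₁ : ℝ := 2 ^ k * r₁ with hα₁def
  set α₂ : ℝ := whitB r₂ k with hα₂def
  have hα₁gt : 1 < α₁ := by
    rw [hα₁def]
    rw [div_lt_iff₀ hr₁] at hk
    linarith
  have hBk : (2:ℝ) ^ k * r₂ ≤ α₂ := whitB_ge r₂ k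
  have hα₁₂ : α₁ < α₂ := by
    have : α₁ < 2 ^ k * r₂ := by rw [hα₁def]; nlinarith
    linarith
  have hα₂r₂ : r₂ ≤ α₂ := by nlinarith
  have hα₁r₁ : r₁ ≤ α₁ := by rw [hα₁def]; nlinarith
  have hα₂pos : 0 < α₂ := lt_of_lt_of_le hr₂ hα₂r₂
  set cS : ℝ := ((2:ℝ) ^ n) ^ ((1 - lam) / p) with hcSdef
  have hcS : 0 < cS := Real.rpow_pos_of_pos (by positivity) _
  set K' : ℝ := (((α₂ / r₂) ^ n) ^ lam) ^ (1 / p) with hK'def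
  have hK' : 0 < K' := by
    have h1 : (0:ℝ) < α₂ / r₂ := by positivity
    exact Real.rpow_pos_of_pos (Real.rpow_pos_of_pos (by positivity) _) _
  refine ⟨α₁, α₂, 1 / K', cS ^ k, hα₁gt, hα₁₂, by positivity, by positivity, fun f => ?_⟩
  rw [morreyNorm_eq_nrm, morreyNorm_eq_nrm]
  constructor
  · have hb := nrm_dilate_le (α₁ := α₁) (α₂ := α₂) hn hΩne hr₂ hr₁₂.le hα₁r₁ hα₂r₂ hlam0 hp
      (fun x => (ENNReal.ofReal |f x|) ^ p * ENNReal.ofReal (w x))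
    calc ENNReal.ofReal (1 / K') *
          nrm (whitneyFamily Ω α₁ α₂) lam p
            (fun x => (ENNReal.ofReal |f x|) ^ p * ENNReal.ofReal (w x))
        ≤ ENNReal.ofReal (1 / K') * (ENNReal.ofReal K' *
            nrm (whitneyFamily Ω r₁ r₂) lam p
              (fun x => (ENNReal.ofReal |f x|) ^ p * ENNReal.ofReal (w x))) :=
          mul_le_mul_right hb _
      _ = ENNReal.ofReal (1 / K' * K') *
            nrm (whitneyFamily Ω r₁ r₂) lam p
              (fun x => (ENNReal.ofReal |f x|) ^ p * ENNReal.ofReal (w x)) := by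
          rw [← mul_assoc, ← ENNReal.ofReal_mul (by positivity)]
      _ = _ := by
          rw [one_div_mul_cancel (ne_of_gt hK'), ENNReal.ofReal_one, one_mul]
  · have hb := nrm_iter (r₁ := r₁) (r₂ := r₂) hΩne hlam0 hp
      (fun x => (ENNReal.ofReal |f x|) ^ p * ENNReal.ofReal (w x)) k
    calc nrm (whitneyFamily Ω r₁ r₂) lam p
          (fun x => (ENNReal.ofReal |f x|) ^ p * ENNReal.ofReal (w x))
        ≤ ENNReal.ofReal cS ^ k *
            nrm (whitneyFamily Ω α₁ α₂) lam p
              (fun x => (ENNReal.ofReal |f x|) ^ p * ENNReal.ofReal (w x)) := hb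
      _ = ENNReal.ofReal (cS ^ k) *
            nrm (whitneyFamily Ω α₁ α₂) lam p
              (fun x => (ENNReal.ofReal |f x|) ^ p * ENNReal.ofReal (w x)) := by
          rw [ENNReal.ofReal_pow hcS.le]
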